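/- arXiv:2311.05340 — 3 statements merged into one kernel-verified Lean document; each statement's English description precedes it below -/
import Mathlib

section
/- Let M and N be matroids on the same ground set E with M a quotient of N, and fix any total order on E. Then the unique Gale-minimal basis of M is a subset of the unique Gale-minimal basis of N. -/
open Finset

attribute [local instance] Classical.propDecidable

noncomputable section

/-- A matroid on `Fin n`, presented by its collection of bases (basis exchange axiom). -/
structure FinMatroid (n : ℕ) where
  bases : Finset (Finset (Fin n))
  bases_nonempty : bases.Nonempty
  exchange : ∀ B₁ ∈ bases, ∀ B₂ ∈ bases, ∀ x ∈ B₁ \ B₂,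
      ∃ y ∈ B₂ \ B₁, insert y (B₁.erase x) ∈ bases

/-- Rank function associated to a collection of bases: `rk S = max |S ∩ B|`. -/
def rkOf {n : ℕ} (Bs : Finset (Finset (Fin n))) (S : Finset (Fin n)) : ℕ :=
  Bs.sup fun B => (S ∩ B).card

/-- Rank function of a matroid. -/
def rk {n : ℕ} (M : FinMatroid n) (S : Finset (Fin n)) : ℕ := rkOf M.bases S

/-- Independence w.r.t. a collection of bases. -/
def Indep {n : ℕ} (Bs : Finset (Finset (Fin n))) (S : Finset (Fin n)) : Prop :=
  ∃ B ∈ Bs, S ⊆ B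

/-- A circuit: a dependent set all of whose proper subsets are independent. -/
def IsCircuit {n : ℕ} (Bs : Finset (Finset (Fin n))) (C : Finset (Fin n)) : Prop :=
  ¬ Indep Bs C ∧ ∀ D ⊆ C, D ≠ C → Indep Bs D

/-- `M` is a quotient of `N`: every circuit of `N` is a union of circuits of `M`. -/
def IsQuotient {n : ℕ} (BsM BsN : Finset (Finset (Fin n))) : Prop :=
  ∀ C, IsCircuit BsN C → ∃ 𝒟 : Finset (Finset (Fin n)),
    (∀ D ∈ 𝒟, IsCircuit BsM D) ∧ C = 𝒟.sup id

/-- The values of a finset under the key `f`, sorted increasingly. -/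
def sortedVals {n : ℕ} (f : Fin n → ℕ) (A : Finset (Fin n)) : List ℕ :=
  (A.image f).sort (· ≤ ·)

/-- Gale order (w.r.t. the total order on `Fin n` given by an injective key `f`):
`A ≤ B` iff the `i`-th smallest element of `A` is `≤` the `i`-th smallest element of `B`. -/
def galeLE {n : ℕ} (f : Fin n → ℕ) (A B : Finset (Fin n)) : Prop :=
  List.Forall₂ (· ≤ ·) (sortedVals f A) (sortedVals f B)

/-- Position of `a` in the cyclic order starting at `i` (so `cpos i i = 0`). -/
def cpos {n : ℕ} (i a : Fin n) : ℕ := ((a - i : Fin n) : ℕ)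

/-- Cyclic half-open interval `(a, b]`; in particular `(a, a] = ∅`. -/
def cycIoc {n : ℕ} (a b : Fin n) : Finset (Fin n) :=
  Finset.univ.filter fun x => cpos a x ≠ 0 ∧ cpos a x ≤ cpos a b

/-- Cyclic closed interval `[a, b]`. -/
def cycIcc {n : ℕ} (a b : Fin n) : Finset (Fin n) :=
  Finset.univ.filter fun x => cpos a x ≤ cpos a b

/-- A decorated permutation: a permutation together with a coloring in `{0, ±1}`
whose zero set is exactly the set of non-fixed points. -/
structure DecoratedPerm (n : ℕ) where
  perm : Equiv.Perm (Fin n)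
  col : Fin n → ℤ
  col_range : ∀ i, col i = 0 ∨ col i = 1 ∨ col i = -1
  col_zero_iff : ∀ i, col i = 0 ↔ perm i ≠ i

/-- Grassmann necklace term `I_i = {a : a <_i π⁻¹(a) or col a = -1}`. -/
def neck {n : ℕ} (π : DecoratedPerm n) (i : Fin n) : Finset (Fin n) :=
  Finset.univ.filter fun a => cpos i a < cpos i (π.perm.symm a) ∨ π.col a = -1

/-- Grassmann conecklace term `J_i = π⁻¹(I_i)`. -/
def coneck {n : ℕ} (π : DecoratedPerm n) (i : Fin n) : Finset (Fin n) :=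
  (neck π i).image π.perm.symm

/-- Rank of a decorated permutation: the common size of its necklace terms. -/
def drank {n : ℕ} (π : DecoratedPerm n) : ℕ :=
  if h : 0 < n then (neck π ⟨0, h⟩).card else 0

/-- Grassmann interval `S^π_i = (π⁻¹(i), i]`, with the coloop convention `[n]`
(the loop convention `∅` is automatic since `(i, i] = ∅`). -/
def SInt {n : ℕ} (π : DecoratedPerm n) (i : Fin n) : Finset (Fin n) :=
  if π.col i = -1 then Finset.univ else cycIoc (π.perm.symm i) i

/-- Shift interval `S^{π,σ}_i = (π⁻¹(i), σ⁻¹(i)]`, with the convention `[n]` when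
`i` is a loop of `π` and a coloop of `σ`. -/
def shiftInt {n : ℕ} (π σ : DecoratedPerm n) (i : Fin n) : Finset (Fin n) :=
  if π.col i = 1 ∧ σ.col i = -1 then Finset.univ
  else cycIoc (π.perm.symm i) (σ.perm.symm i)

/-- CW-arrow starting at `i`: the cyclic interval from `i` to `π(i)` (all of `[n]` for coloops). -/
def cwArrow {n : ℕ} (π : DecoratedPerm n) (i : Fin n) : Finset (Fin n) :=
  if π.col i = -1 then Finset.univ
  else Finset.univ.filter fun j => cpos i j ≤ cpos i (π.perm i)

/-- The CW-function: the number of CW-arrows contained in `A` (for `A ≠ [n]`),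
and `n - rk(M)` for `A = [n]`. -/
def cw {n : ℕ} (π : DecoratedPerm n) (A : Finset (Fin n)) : ℕ :=
  if A = Finset.univ then n - drank π
  else (Finset.univ.filter fun i => cwArrow π i ⊆ A).card

/-- Bases of the positroid associated with a decorated permutation: sets that are
above every necklace term in the corresponding cyclic Gale order. -/
def positroidBases {n : ℕ} (π : DecoratedPerm n) : Finset (Finset (Fin n)) :=
  Finset.univ.filter fun B => ∀ i, galeLE (cpos i) (neck π i) B

/-- `σ` is the cyclic shift `ρ_A(π)`: positions in `A` are frozen; at a position
`i ∉ A` the new value is `π(j)` where `j` is the maximum of `Aᶜ` in the cyclic order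
starting at `i`; new fixed points are decorated as loops. -/
def IsCyclicShift {n : ℕ} (π σ : DecoratedPerm n) (A : Finset (Fin n)) : Prop :=
  (∀ i ∈ A, σ.perm i = π.perm i ∧ σ.col i = π.col i) ∧
  (∀ i ∉ A, ∃ j, j ∉ A ∧ (∀ j', j' ∉ A → cpos i j' ≤ cpos i j) ∧ σ.perm i = π.perm j) ∧
  (∀ i ∉ A, σ.col i = if σ.perm i = i then 1 else 0)

/-- The shift intervals `S^{π,σ}_i` partition `[n]`. -/
def ShiftPartition {n : ℕ} (π σ : DecoratedPerm n) : Prop :=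
  (∀ i j : Fin n, i ≠ j → Disjoint (shiftInt π σ i) (shiftInt π σ j)) ∧
  Finset.univ.biUnion (shiftInt π σ) = Finset.univ

/-- `C` is a cyclic component of `A`: a maximal cyclic interval contained in `A`. -/
def IsCycComponent {n : ℕ} [NeZero n] (A C : Finset (Fin n)) : Prop :=
  ∃ a b : Fin n, C = cycIcc a b ∧ C ⊆ A ∧ (a - 1) ∉ A ∧ (b + 1) ∉ A

/-- Bases of the lattice path matroid `M[U, L]`. -/
def lpmBases {n : ℕ} (U L : Finset (Fin n)) : Finset (Finset (Fin n)) :=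
  Finset.univ.filter fun B => galeLE Fin.val U B ∧ galeLE Fin.val B L
end

/-! For an initial segment `A` of the order, a Gale-minimal basis `B₀` meets `A` in a basis of
`A`: any basis `B` has `|B ∩ A| ≤ |B₀ ∩ A|`, and an independent subset of `A` strictly containing
`B₀ ∩ A` would extend to a basis violating this. Now let `x ∈ BM \ BN` and let `A` be the set of
elements below `x`. Since `BN ∩ (A ∪ {x}) = BN ∩ A`, the element `x` lies in the `N`-closure of
`A`, whereas `x ∉ cl_M(BM ∩ A) = cl_M(A)` because `BM` is independent. But closures only grow
when passing from `N` to its quotient `M`: a circuit of `N` through `x` inside `A ∪ {x}` is a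
union of circuits of `M`, one of which passes through `x`. -/

theorem List.Forall₂.countP_lt_le {α : Type*} [Preorder α] [DecidableLT α] {l₁ l₂ : List α}
    (h : List.Forall₂ (· ≤ ·) l₁ l₂) (c : α) :
    l₂.countP (· < c) ≤ l₁.countP (· < c) := by
  induction h with
  | nil => rfl
  | @cons a b l₁ l₂ hab _ ih =>
    rw [List.countP_cons, List.countP_cons]
    by_cases hbc : b < c
    · simp [hbc, hab.trans_lt hbc, ih]
    · by_cases hac : a < c <;> simp [hac, hbc] <;> omega

theorem card_filter_lt_eq_countP_sortedVals {n : ℕ} {f : Fin n → ℕ} (hf : Function.Injective f)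
    (A : Finset (Fin n)) (c : ℕ) :
    #(A.filter (f · < c)) = (sortedVals f A).countP (· < c) := by
  rw [sortedVals, ← Multiset.coe_countP, Finset.sort_eq, Multiset.countP_eq_card_filter,
    ← Finset.filter_val, ← Finset.card_def, Finset.filter_image,
    Finset.card_image_of_injective _ hf]

theorem galeLE.card_filter_lt_le {n : ℕ} {f : Fin n → ℕ} (hf : Function.Injective f)
    {A B : Finset (Fin n)} (h : galeLE f A B) (c : ℕ) :
    #(B.filter (f · < c)) ≤ #(A.filter (f · < c)) := by
  rw [card_filter_lt_eq_countP_sortedVals hf, card_filter_lt_eq_countP_sortedVals hf]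
  exact h.countP_lt_le c

namespace FinMatroid

variable {n : ℕ}

def toMatroid (M : FinMatroid n) : Matroid (Fin n) :=
  Matroid.ofIsBaseOfFinite Set.finite_univ (fun B => ∃ B₀ ∈ M.bases, (B₀ : Set (Fin n)) = B)
    (let ⟨B, hB⟩ := M.bases_nonempty; ⟨B, B, hB, rfl⟩)
    (by
      rintro _ _ ⟨B₁, hB₁, rfl⟩ ⟨B₂, hB₂, rfl⟩ x hx
      obtain ⟨y, hy, hB⟩ := M.exchange B₁ hB₁ B₂ hB₂ x (by simpa using hx)
      exact ⟨y, by simpa using hy, _, hB, by simp⟩)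
    (fun _ _ => Set.subset_univ _)

variable {M : FinMatroid n}

@[simp]
theorem toMatroid_E : M.toMatroid.E = Set.univ := rfl

theorem isBase_toMatroid_iff {B : Set (Fin n)} :
    M.toMatroid.IsBase B ↔ ∃ B₀ ∈ M.bases, (B₀ : Set (Fin n)) = B := Iff.rfl

theorem indep_toMatroid_coe_iff {S : Finset (Fin n)} :
    M.toMatroid.Indep S ↔ Indep M.bases S := by
  simp only [Matroid.indep_iff, isBase_toMatroid_iff, Indep]
  constructor
  · rintro ⟨_, ⟨B, hB, rfl⟩, hSB⟩
    exact ⟨B, hB, Finset.coe_subset.mp hSB⟩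
  · rintro ⟨B, hB, hSB⟩
    exact ⟨B, ⟨B, hB, rfl⟩, Finset.coe_subset.mpr hSB⟩

theorem isCircuit_toMatroid_coe_iff {C : Finset (Fin n)} :
    M.toMatroid.IsCircuit C ↔ IsCircuit M.bases C := by
  rw [Matroid.isCircuit_iff_forall_ssubset, Matroid.dep_iff, IsCircuit, indep_toMatroid_coe_iff]
  simp only [toMatroid_E, Set.subset_univ, and_true]
  refine and_congr_right fun _ => ⟨fun h D hDC hne => ?_, fun h I hIC => ?_⟩
  · exact indep_toMatroid_coe_iff.mp
      (h (Finset.coe_ssubset.mpr (Finset.ssubset_iff_subset_ne.mpr ⟨hDC, hne⟩)))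
  · lift I to Finset (Fin n) using I.toFinite
    obtain ⟨hIC, hne⟩ := Finset.ssubset_iff_subset_ne.mp (Finset.coe_ssubset.mp hIC)
    exact indep_toMatroid_coe_iff.mpr (h I hIC hne)

theorem isBasis_filter_lt_of_galeLE {f : Fin n → ℕ} (hf : Function.Injective f)
    {B₀ : Finset (Fin n)} (hB₀ : B₀ ∈ M.bases) (hmin : ∀ B ∈ M.bases, galeLE f B₀ B) (c : ℕ) :
    M.toMatroid.IsBasis (B₀.filter (f · < c)) {y | f y < c} := by
  have hI : M.toMatroid.Indep (B₀.filter (f · < c)) :=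
    indep_toMatroid_coe_iff.mpr ⟨B₀, hB₀, filter_subset _ _⟩
  refine hI.isBasis_of_forall_insert (fun y hy => (mem_filter.mp hy).2) fun e ⟨hec, heI⟩ => ?_
  refine ⟨fun hins => ?_, Set.subset_univ _⟩
  obtain ⟨_, ⟨B, hB, rfl⟩, hsub⟩ := hins.exists_isBase_superset
  have hle : #(insert e (B₀.filter (f · < c))) ≤ #(B.filter (f · < c)) := by
    refine card_le_card fun y hy => mem_filter.mpr ⟨?_, ?_⟩
    · exact Finset.mem_coe.mp (hsub (by simpa using hy))
    · rcases mem_insert.mp hy with rfl | hy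
      · exact hec
      · exact (mem_filter.mp hy).2
  rw [card_insert_of_notMem (fun h => heI (Finset.mem_coe.mpr h))] at hle
  have := (hmin B hB).card_filter_lt_le hf c
  omega

end FinMatroid

open FinMatroid

theorem IsQuotient.closure_subset_closure {n : ℕ} {M N : FinMatroid n}
    (hq : IsQuotient M.bases N.bases) (X : Set (Fin n)) :
    N.toMatroid.closure X ⊆ M.toMatroid.closure X := by
  intro x hx
  by_cases hxX : x ∈ X
  · exact M.toMatroid.mem_closure_of_mem hxX
  obtain ⟨C, hCX, hC, hxC⟩ := N.toMatroid.exists_isCircuit_of_mem_closure hx hxX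
  lift C to Finset (Fin n) using C.toFinite
  obtain ⟨𝒟, h𝒟, rfl⟩ := hq C (isCircuit_toMatroid_coe_iff.mp hC)
  obtain ⟨D, hD, hxD⟩ := Finset.mem_sup.mp (Finset.mem_coe.mp hxC)
  have hDX : (D : Set (Fin n)) \ {x} ⊆ X :=
    Set.sdiff_singleton_subset_iff.mpr ((Finset.coe_subset.mpr (le_sup (f := id) hD)).trans hCX)
  exact M.toMatroid.closure_subset_closure hDX
    ((isCircuit_toMatroid_coe_iff.mpr (h𝒟 D hD)).mem_closure_sdiff_singleton_of_mem hxD)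

/-- If `M` is a quotient of `N`, then for any total order on the ground set
(given by an injective key `f`), the Gale-minimal basis of `M` is contained in the
Gale-minimal basis of `N`. -/
theorem stmt1 (n : ℕ) (M N : FinMatroid n)
    (hq : IsQuotient M.bases N.bases)
    (f : Fin n → ℕ) (hf : Function.Injective f)
    (BM BN : Finset (Fin n))
    (hBM : BM ∈ M.bases ∧ ∀ B ∈ M.bases, galeLE f BM B)
    (hBN : BN ∈ N.bases ∧ ∀ B ∈ N.bases, galeLE f BN B) :
    BM ⊆ BN := by
  intro x hxBM
  by_contra hxBN
  have hBN_filter : BN.filter (f · < f x + 1) = BN.filter (f · < f x) :=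
    filter_congr fun y hy => by
      have := hf.ne (ne_of_mem_of_not_mem hy hxBN)
      omega
  have hxN : x ∈ N.toMatroid.closure {y | f y < f x} := by
    have hx : x ∈ N.toMatroid.closure (BN.filter (f · < f x + 1)) :=
      (isBasis_filter_lt_of_galeLE hf hBN.1 hBN.2 _).subset_closure (Nat.lt_succ_self _)
    rw [hBN_filter] at hx
    exact N.toMatroid.closure_subset_closure (fun y hy => (mem_filter.mp hy).2) hx
  have hxM : x ∈ M.toMatroid.closure (BM.filter (f · < f x)) := by
    rw [(isBasis_filter_lt_of_galeLE hf hBM.1 hBM.2 _).closure_eq_closure]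
    exact hq.closure_subset_closure _ hxN
  have hBM_indep : M.toMatroid.Indep BM := indep_toMatroid_coe_iff.mpr ⟨BM, hBM.1, subset_refl _⟩
  exact hBM_indep.notMem_closure_sdiff_of_mem hxBM <| M.toMatroid.closure_subset_closure
    (Set.subset_sdiff_singleton (coe_subset.mpr (filter_subset _ _)) (by simp)) hxM
end

section
/- Let σ = (σ, col_σ) and π = (π, col_π) be decorated permutations on [n] with Grassmann conecklaces J^σ and J^π. If J^σ_i ⊆ J^π_i for all i ∈ [n], then {a ∈ [n] : σ(a) ≠ π(a) or col_σ(a) ≠ col_π(a)} = ∪_{i=1}^n (J^π_i \ J^σ_i). -/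
open Finset

attribute [local instance] Classical.propDecidable

section Aux

lemma cpos_eq {n : ℕ} (a b : Fin n) :
    cpos a b = if a.val ≤ b.val then b.val - a.val else b.val + n - a.val := by
  have hn : 0 < n := a.pos
  have hb := b.isLt; have ha := a.isLt
  show ((b - a : Fin n) : ℕ) = _
  rw [Fin.sub_def]
  simp only []
  split_ifs with h
  · have h2 : n - ↑a + ↑b = n + (↑b - ↑a) := by omega
    rw [h2, Nat.add_mod_left, Nat.mod_eq_of_lt (by omega)]
  · rw [Nat.mod_eq_of_lt (by omega)]; omega

lemma cpos_self {n : ℕ} (a : Fin n) : cpos a a = 0 := by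
  rw [cpos_eq]; simp

lemma cpos_inj {n : ℕ} {a b c : Fin n} (h : cpos a b = cpos a c) : b = c := by
  have hb := b.isLt; have hc := c.isLt; have ha := a.isLt
  rw [cpos_eq, cpos_eq] at h
  apply Fin.ext
  split_ifs at h <;> omega

lemma cpos_eq_zero {n : ℕ} {a b : Fin n} (h : cpos a b = 0) : b = a :=
  cpos_inj (h.trans (cpos_self a).symm)

lemma cpos_pos {n : ℕ} {a b : Fin n} (h : b ≠ a) : 0 < cpos a b :=
  Nat.pos_of_ne_zero fun e => h (cpos_eq_zero e)

lemma cpos_lt_iff {n : ℕ} {a b c : Fin n} (hba : b ≠ a) :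
    cpos b c < cpos b a ↔ cpos a b ≤ cpos a c := by
  have hvals : b.val ≠ a.val := fun e => hba (Fin.ext e)
  have hb := b.isLt; have hc := c.isLt; have ha := a.isLt
  rw [cpos_eq, cpos_eq, cpos_eq, cpos_eq]
  split_ifs <;> omega

lemma mem_coneck {n : ℕ} (π : DecoratedPerm n) (i a : Fin n) :
    a ∈ coneck π i ↔ (cpos i (π.perm a) < cpos i a ∨ π.col (π.perm a) = -1) := by
  unfold coneck neck
  simp only [Finset.mem_image, Finset.mem_filter, Finset.mem_univ, true_and]
  constructor
  · rintro ⟨b, hb, rfl⟩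
    simpa using hb
  · intro hcond
    exact ⟨π.perm a, by simpa using hcond, by simp⟩

lemma col_neg_one_fix {n : ℕ} (π : DecoratedPerm n) {a : Fin n}
    (h : π.col (π.perm a) = -1) : π.perm a = a := by
  have h0 : π.col (π.perm a) ≠ 0 := by rw [h]; norm_num
  have hfix : π.perm (π.perm a) = π.perm a := by
    by_contra hne
    exact h0 ((π.col_zero_iff _).mpr hne)
  exact π.perm.injective hfix

lemma coneck_congr {n : ℕ} (σ π : DecoratedPerm n) (a : Fin n)
    (h1 : σ.perm a = π.perm a) (h2 : σ.col a = π.col a) (i : Fin n) :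
    a ∈ coneck σ i ↔ a ∈ coneck π i := by
  rw [mem_coneck, mem_coneck, h1]
  have key : σ.col (π.perm a) = -1 ↔ π.col (π.perm a) = -1 := by
    constructor
    · intro hc
      have hc' : σ.col (σ.perm a) = -1 := by rw [h1]; exact hc
      have hfix : σ.perm a = a := col_neg_one_fix σ hc'
      have hfa : π.perm a = a := by rw [← h1]; exact hfix
      rw [hfa] at hc ⊢
      rw [← h2]; exact hc
    · intro hc
      have hfa : π.perm a = a := col_neg_one_fix π hc
      rw [hfa] at hc ⊢
      rw [h2]; exact hc
  rw [key]

lemma pointwise {n : ℕ} (σ π : DecoratedPerm n) (a : Fin n)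
    (heq : ∀ i, (cpos i (σ.perm a) < cpos i a ∨ σ.col (σ.perm a) = -1) ↔
               (cpos i (π.perm a) < cpos i a ∨ π.col (π.perm a) = -1)) :
    σ.perm a = π.perm a ∧ σ.col a = π.col a := by
  by_cases hσ : σ.col (σ.perm a) = -1
  · have hba : σ.perm a = a := col_neg_one_fix σ hσ
    have h1 : cpos a (π.perm a) < cpos a a ∨ π.col (π.perm a) = -1 :=
      (heq a).mp (Or.inr hσ)
    have hπ : π.col (π.perm a) = -1 := by
      rcases h1 with h | h
      · rw [cpos_self] at h; omega
      · exact h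
    have hca : π.perm a = a := col_neg_one_fix π hπ
    refine ⟨by rw [hba, hca], ?_⟩
    rw [hba] at hσ; rw [hca] at hπ; rw [hσ, hπ]
  · by_cases hπ : π.col (π.perm a) = -1
    · have h1 : cpos a (σ.perm a) < cpos a a ∨ σ.col (σ.perm a) = -1 :=
        (heq a).mpr (Or.inr hπ)
      rcases h1 with h | h
      · rw [cpos_self] at h; omega
      · exact absurd h hσ
    · by_cases hba : σ.perm a = a
      · have hca : π.perm a = a := by
          by_contra hcne
          have h1 : cpos (π.perm a) (π.perm a) < cpos (π.perm a) a ∨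
              π.col (π.perm a) = -1 :=
            Or.inl (by rw [cpos_self]; exact cpos_pos (fun e => hcne e.symm))
          have h2 := (heq (π.perm a)).mpr h1
          rcases h2 with h2 | h2
          · rw [hba] at h2; omega
          · exact hσ h2
        constructor
        · rw [hba, hca]
        · have hσ1 : σ.col a = 1 := by
            rcases σ.col_range a with h0 | h1 | h2
            · exact absurd hba ((σ.col_zero_iff a).mp h0)
            · exact h1
            · rw [hba] at hσ; exact absurd h2 hσ
          have hπ1 : π.col a = 1 := by
            rcases π.col_range a with h0 | h1 | h2
            · exact absurd hca ((π.col_zero_iff a).mp h0)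
            · exact h1
            · rw [hca] at hπ; exact absurd h2 hπ
          rw [hσ1, hπ1]
      · have hca : π.perm a ≠ a := by
          intro hca
          have h1 : cpos (σ.perm a) (σ.perm a) < cpos (σ.perm a) a ∨
              σ.col (σ.perm a) = -1 :=
            Or.inl (by rw [cpos_self]; exact cpos_pos (fun e => hba e.symm))
          have h2 := (heq (σ.perm a)).mp h1
          rcases h2 with h2 | h2
          · rw [hca] at h2; omega
          · exact hπ h2
        have h1 : cpos (σ.perm a) (π.perm a) < cpos (σ.perm a) a := by
          have := (heq (σ.perm a)).mp
            (Or.inl (by rw [cpos_self]; exact cpos_pos (fun e => hba e.symm)))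
          rcases this with h | h
          · exact h
          · exact absurd h hπ
        have h2 : cpos (π.perm a) (σ.perm a) < cpos (π.perm a) a := by
          have := (heq (π.perm a)).mpr
            (Or.inl (by rw [cpos_self]; exact cpos_pos (fun e => hca e.symm)))
          rcases this with h | h
          · exact h
          · exact absurd h hσ
        have e1 : cpos a (σ.perm a) ≤ cpos a (π.perm a) := (cpos_lt_iff hba).mp h1
        have e2 : cpos a (π.perm a) ≤ cpos a (σ.perm a) := (cpos_lt_iff hca).mp h2
        have hbc : σ.perm a = π.perm a := cpos_inj (Nat.le_antisymm e1 e2)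
        refine ⟨hbc, ?_⟩
        rw [(σ.col_zero_iff a).mpr hba, (π.col_zero_iff a).mpr hca]

end Aux

/-- If the conecklaces satisfy `J^σ_i ⊆ J^π_i` for all `i`, then the set of
positions where `σ` and `π` differ (in value or decoration) is `∪_i (J^π_i \ J^σ_i)`. -/
theorem stmt7 (n : ℕ) (σ π : DecoratedPerm n)
    (h : ∀ i, coneck σ i ⊆ coneck π i) :
    (Finset.univ.filter fun a => σ.perm a ≠ π.perm a ∨ σ.col a ≠ π.col a) =
      Finset.univ.biUnion (fun i => coneck π i \ coneck σ i) := by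
  ext a
  simp only [Finset.mem_filter, Finset.mem_biUnion, Finset.mem_sdiff, Finset.mem_univ, true_and]
  constructor
  · intro hd
    by_contra hno
    push_neg at hno
    have heq : ∀ i, (cpos i (σ.perm a) < cpos i a ∨ σ.col (σ.perm a) = -1) ↔
        (cpos i (π.perm a) < cpos i a ∨ π.col (π.perm a) = -1) := fun i => by
      rw [← mem_coneck, ← mem_coneck]
      exact ⟨fun hh => h i hh, hno i⟩
    have hp := pointwise σ π a heq
    rcases hd with hd | hd
    · exact hd hp.1
    · exact hd hp.2
  · rintro ⟨i, hπi, hσi⟩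
    by_contra hno
    push_neg at hno
    exact hσi ((coneck_congr σ π a hno.1 hno.2 i).mpr hπi)
end

section
/- Let π be a decorated permutation on [n] and let (I_1,...,I_n) be its Grassmann necklace, defined by I_i = {j ∈ [n] : j <_i π^{-1}(j) or col(j) = −1}. Then (I_1,...,I_n) satisfies the Grassmann necklace axioms: for each i, if i ∈ I_i then I_{i+1} = (I_i \ {i}) ∪ {j} for some j ∈ [n], and if i ∉ I_i then I_{i+1} = I_i (indices mod n). -/
open Finset

attribute [local instance] Classical.propDecidable

section stmt19aux
variable {n : ℕ} [NeZero n]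

omit [NeZero n] in
private lemma s19_modn {x : ℕ} (hn : 0 < n) (h : x < 2*n) :
    x % n = if x < n then x else x - n := by
  split_ifs with h'
  · exact Nat.mod_eq_of_lt h'
  · rw [Nat.mod_eq_sub_mod (by omega)]
    exact Nat.mod_eq_of_lt (by omega)

omit [NeZero n] in
private lemma s19_cpos_eq (i a : Fin n) : cpos i a = (n - i.val + a.val) % n := by
  simp [cpos, Fin.sub_def]

private lemma s19_cpos_self (i : Fin n) : cpos i i = 0 := by simp [cpos]

omit [NeZero n] in
private lemma s19_cpos_lt (i a : Fin n) : cpos i a < n := (a - i).is_lt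

private lemma s19_cpos_inj {i a b : Fin n} (h : cpos i a = cpos i b) : a = b := by
  have : a - i = b - i := Fin.val_injective h
  exact sub_left_injective this

private lemma s19_val_succ (i : Fin n) : ((i+1 : Fin n)).val = (i.val + 1) % n := by
  rw [Fin.add_def]
  show (i.val + (1 : Fin n).val) % n = _
  have h1 : (1 : Fin n).val = 1 % n := rfl
  rw [h1, Nat.add_mod i.val 1 n, Nat.mod_eq_of_lt i.is_lt]

private lemma s19_cpos_succ {i a : Fin n} (h : a ≠ i) :
    cpos (i+1) a + 1 = cpos i a := by
  have hn : 0 < n := Fin.pos i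
  have hi := i.is_lt
  have ha := a.is_lt
  have hne : a.val ≠ i.val := fun hh => h (Fin.ext hh)
  rw [s19_cpos_eq, s19_cpos_eq, s19_val_succ]
  rcases Nat.lt_or_ge (i.val + 1) n with hc | hc
  · rw [Nat.mod_eq_of_lt hc, s19_modn hn (by omega), s19_modn hn (by omega)]
    split_ifs <;> omega
  · have h0 : (i.val + 1) % n = 0 := by
      have : i.val + 1 = n := by omega
      rw [this, Nat.mod_self]
    rw [h0, s19_modn hn (by omega), s19_modn hn (by omega)]
    split_ifs <;> omega

private lemma s19_cpos_succ_self (i : Fin n) : cpos (i+1) i = n - 1 := by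
  have hn : 0 < n := Fin.pos i
  have hi := i.is_lt
  rw [s19_cpos_eq, s19_val_succ]
  rcases Nat.lt_or_ge (i.val + 1) n with hc | hc
  · rw [Nat.mod_eq_of_lt hc, s19_modn hn (by omega)]
    split_ifs <;> omega
  · have h0 : (i.val + 1) % n = 0 := by
      have : i.val + 1 = n := by omega
      rw [this, Nat.mod_self]
    rw [h0, s19_modn hn (by omega)]
    split_ifs <;> omega

omit [NeZero n] in
private lemma s19_mem_neck (π : DecoratedPerm n) (i a : Fin n) :
    a ∈ neck π i ↔ (cpos i a < cpos i (π.perm.symm a) ∨ π.col a = -1) := by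
  simp [neck]

end stmt19aux

/-- The sequence `I_i = {j : j <_i π⁻¹(j) or col(j) = -1}` associated to a
decorated permutation satisfies the Grassmann necklace axioms. -/
theorem stmt19 (n : ℕ) [NeZero n] (π : DecoratedPerm n) (i : Fin n) :
    (i ∈ neck π i →
      ∃ j : Fin n, neck π (i + 1) = insert j ((neck π i).erase i)) ∧
    (i ∉ neck π i → neck π (i + 1) = neck π i) := by
  have hn : 0 < n := Fin.pos i
  constructor
  · intro h
    by_cases hc : π.col i = -1
    · -- i is a coloop: the necklace term is unchanged, take j = i
      refine ⟨i, ?_⟩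
      rw [Finset.insert_erase h]
      have hfix : π.perm i = i := by
        by_contra hne
        have h0 := (π.col_zero_iff i).mpr hne
        rw [h0] at hc; norm_num at hc
      have hfix' : π.perm.symm i = i := by
        rw [Equiv.symm_apply_eq]; exact hfix.symm
      ext a
      simp only [s19_mem_neck]
      by_cases ha : a = i
      · subst ha; simp [hc]
      · have hps : π.perm.symm a ≠ i := by
          intro hh
          apply ha
          have : a = π.perm i := by
            conv_lhs => rw [← π.perm.apply_symm_apply a]
            rw [hh]
          rw [this, hfix]
        have h1 := s19_cpos_succ ha
        have h2 := s19_cpos_succ hps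
        constructor
        · rintro (hlt | hcc)
          · exact Or.inl (by omega)
          · exact Or.inr hcc
        · rintro (hlt | hcc)
          · exact Or.inl (by omega)
          · exact Or.inr hcc
    · -- i is moved by π; the new element is j = π(i)
      rw [s19_mem_neck] at h
      have hsi : π.perm.symm i ≠ i := by
        rcases h with h | h
        · intro hh
          rw [hh, s19_cpos_self] at h
          exact absurd h (lt_irrefl 0)
        · exact absurd h hc
      set j := π.perm i with hj
      have hsj : π.perm.symm j = i := π.perm.symm_apply_apply i
      have hji : j ≠ i := by
        intro hh
        apply hsi
        calc π.perm.symm i = π.perm.symm j := by rw [hh]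
          _ = i := hsj
      have hcolj : π.col j ≠ -1 := by
        have hnej : π.perm j ≠ j := by
          intro hh
          have := congrArg π.perm.symm hh
          rw [π.perm.symm_apply_apply, hsj] at this
          exact hji this
        have h0 := (π.col_zero_iff j).mpr hnej
        rw [h0]; norm_num
      refine ⟨j, ?_⟩
      ext a
      simp only [s19_mem_neck, Finset.mem_insert, Finset.mem_erase]
      by_cases haj : a = j
      · subst haj
        have hl : cpos (i+1) j < cpos (i+1) (π.perm.symm j) := by
          rw [hsj, s19_cpos_succ_self]
          have hlt := s19_cpos_lt (i+1) j
          have hne : cpos (i+1) j ≠ n - 1 := by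
            intro hh
            exact hji (s19_cpos_inj (by rw [hh, s19_cpos_succ_self]))
          omega
        simp [hl]
      · by_cases hai : a = i
        · subst hai
          constructor
          · rintro (hlt | hcc)
            · exfalso
              have h1 := s19_cpos_succ_self a
              have h2 := s19_cpos_lt (a+1) (π.perm.symm a)
              omega
            · exact absurd hcc hc
          · rintro (hh | ⟨hne, _⟩)
            · exact absurd hh haj
            · exact absurd rfl hne
        · have hps : π.perm.symm a ≠ i := by
            intro hh
            apply haj
            have : a = π.perm i := by
              conv_lhs => rw [← π.perm.apply_symm_apply a]
              rw [hh]
            rw [this]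
          have h1 := s19_cpos_succ hai
          have h2 := s19_cpos_succ hps
          constructor
          · rintro (hlt | hcc)
            · exact Or.inr ⟨hai, Or.inl (by omega)⟩
            · exact Or.inr ⟨hai, Or.inr hcc⟩
          · rintro (hh | ⟨_, (hlt | hcc)⟩)
            · exact absurd hh haj
            · exact Or.inl (by omega)
            · exact Or.inr hcc
  · intro h
    rw [s19_mem_neck] at h
    push_neg at h
    obtain ⟨h1, h2⟩ := h
    rw [s19_cpos_self] at h1
    have hsi : π.perm.symm i = i := by
      by_contra hh
      have : cpos i (π.perm.symm i) ≠ 0 := by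
        intro hz
        exact hh (s19_cpos_inj (by rw [hz, s19_cpos_self]))
      omega
    ext a
    simp only [s19_mem_neck]
    by_cases hai : a = i
    · subst hai
      constructor
      · rintro (hlt | hcc)
        · exfalso; rw [hsi] at hlt; exact absurd hlt (lt_irrefl _)
        · exact absurd hcc h2
      · rintro (hlt | hcc)
        · exfalso; rw [hsi, s19_cpos_self] at hlt; omega
        · exact absurd hcc h2
    · have hps : π.perm.symm a ≠ i := by
        intro hh
        apply hai
        have : a = π.perm i := by
          conv_lhs => rw [← π.perm.apply_symm_apply a]
          rw [hh]
        have hfix : π.perm i = i := by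
          conv_lhs => rw [← hsi, π.perm.apply_symm_apply]
        rw [this, hfix]
      have h1' := s19_cpos_succ hai
      have h2' := s19_cpos_succ hps
      constructor
      · rintro (hlt | hcc)
        · exact Or.inl (by omega)
        · exact Or.inr hcc
      · rintro (hlt | hcc)
        · exact Or.inl (by omega)
        · exact Or.inr hcc
end
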